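/- Fix s ∈ {0,1}^n and let m−1 be the number of 1's in s (so m = weight(s) + 1). For x ∈ {0,1}^n, let x|_s ∈ {0,1}^{m−1} denote the substring of x at positions where s_i = 1 and let x|_{¬s} ∈ {0,1}^{n−m+1} denote the substring at positions where s_i = 0. Then for all (x,y,z) ∈ {0,1}^n × {0,1} × {0,1}: M_s(x,y,z) = par_m(x|_s, y) · par_{n+2−m}(x|_{¬s}, z), where (x|_s, y) denotes the length-m string obtained by appending the bit y to x|_s and similarly for (x|_{¬s}, z). In particular, M_s is a product of two even-parity uniform distributions up to a permutation of the bits. -/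
import Mathlib


/-- The parity function `χ_s(x) = x · s mod 2`. -/
def chi {n : ℕ} (s x : Fin n → ZMod 2) : ZMod 2 := ∑ i, s i * x i

/-- The parity `|x|` of a bitstring: the sum of its bits mod 2. -/
def par {n : ℕ} (x : Fin n → ZMod 2) : ZMod 2 := ∑ i, x i

/-- The fermionized parity distribution `M_s` on `{0,1}^{n+2}`:
`M_s(x,y,z) = 2^{-n}` if `χ_s(x) = y` and `|x| + y = z`, and `0` otherwise. -/
noncomputable def Mdist {n : ℕ} (s : Fin n → ZMod 2) (x : Fin n → ZMod 2) (y z : ZMod 2) : ℝ :=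
  if chi s x = y ∧ par x + y = z then ((2 : ℝ) ^ n)⁻¹ else 0

/-- The even-parity uniform distribution `par_k` on bitstrings indexed by a finite type
(of cardinality `k`): `par_k(w) = 2^{-(k-1)}` if `|w| = 0 (mod 2)` and `0` otherwise. -/
noncomputable def parEven {α : Type} [Fintype α] (w : α → ZMod 2) : ℝ :=
  if (∑ i, w i) = 0 then ((2 : ℝ) ^ (Fintype.card α - 1))⁻¹ else 0

/-- `M_s` is a product of two even-parity uniform distributions (up to a permutation of
the bits): writing `m - 1` for the Hamming weight of `s`, for all `(x,y,z)` we have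
`M_s(x,y,z) = par_m(x|_s, y) · par_{n+2-m}(x|_{¬s}, z)`, where `(x|_s, y)` is the
length-`m` string consisting of the bits of `x` at positions where `s_i = 1` together
with `y`, and `(x|_{¬s}, z)` consists of the bits of `x` at positions where `s_i = 0`
together with `z`. -/
theorem Mdist_eq_prod_parEven (n : ℕ) (s : Fin n → ZMod 2) (m : ℕ)
    (hm : m = (Finset.univ.filter (fun i => s i = 1)).card + 1)
    (x : Fin n → ZMod 2) (y z : ZMod 2) :
    -- the two appended substrings have lengths `m` and `n + 2 - m`
    Fintype.card ({i : Fin n // s i = 1} ⊕ Unit) = m ∧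
    Fintype.card ({i : Fin n // s i = 0} ⊕ Unit) = n + 2 - m ∧
    Mdist s x y z
      = parEven (Sum.elim (fun i : {i : Fin n // s i = 1} => x i.1) (fun _ : Unit => y))
        * parEven (Sum.elim (fun i : {i : Fin n // s i = 0} => x i.1) (fun _ : Unit => z)) := by
  classical
  set k := (Finset.univ.filter (fun i => s i = 1)).card with hk
  have hnot : ∀ i : Fin n, s i = 0 ↔ ¬ s i = 1 := by
    intro i
    revert hm
    generalize s i = a
    intro _
    revert a; decide
  have hk_le : k ≤ n := by
    simpa using Finset.card_filter_le Finset.univ (fun i => s i = 1)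
  have hcard1 : Fintype.card {i : Fin n // s i = 1} = k := by
    simp [hk, Fintype.card_subtype]
  have hcard0 : Fintype.card {i : Fin n // s i = 0} = n - k := by
    rw [Fintype.card_subtype]
    have : (Finset.univ.filter (fun i => s i = 0)) = (Finset.univ.filter (fun i => ¬ s i = 1)) := by
      apply Finset.filter_congr
      intro i _
      simpa using hnot i
    rw [this, Finset.filter_not, Finset.card_sdiff_of_subset (Finset.filter_subset _ _)]
    simp [hk]
  refine ⟨by simp [hcard1, hm], by simp [hcard0]; omega, ?_⟩
  -- sums
  set S1 : ZMod 2 := ∑ i ∈ Finset.univ.filter (fun i => s i = 1), x i with hS1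
  set S0 : ZMod 2 := ∑ i ∈ Finset.univ.filter (fun i => s i = 0), x i with hS0
  have hchi : chi s x = S1 := by
    rw [chi, hS1, Finset.sum_filter]
    apply Finset.sum_congr rfl
    intro i _
    rcases (by revert hm; generalize s i = a; intro _; revert a; decide :
      s i = 0 ∨ s i = 1) with h | h <;> simp [h]
  have hpar : par x = S1 + S0 := by
    rw [par, hS1, hS0]
    rw [← Finset.sum_filter_add_sum_filter_not Finset.univ (fun i => s i = 1) x]
    congr 1
    apply Finset.sum_congr
    · apply Finset.filter_congr; intro i _; simpa using (hnot i).symm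
    · intros; rfl
  have hsum1 : (∑ i : {i : Fin n // s i = 1} ⊕ Unit,
      Sum.elim (fun i : {i : Fin n // s i = 1} => x i.1) (fun _ : Unit => y) i) = S1 + y := by
    rw [Fintype.sum_sum_type]
    congr 1
    · exact (Finset.sum_subtype _ (by simp) (fun i => x i)).symm
    · simp
  have hsum0 : (∑ i : {i : Fin n // s i = 0} ⊕ Unit,
      Sum.elim (fun i : {i : Fin n // s i = 0} => x i.1) (fun _ : Unit => z) i) = S0 + z := by
    rw [Fintype.sum_sum_type]
    congr 1
    · exact (Finset.sum_subtype _ (by simp) (fun i => x i)).symm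
    · simp
  have key : ∀ a b u v : ZMod 2, (a = u ∧ a + b + u = v) ↔ (a + u = 0 ∧ b + v = 0) := by decide
  have hiff : (chi s x = y ∧ par x + y = z) ↔ (S1 + y = 0 ∧ S0 + z = 0) := by
    rw [hchi, hpar]; exact key S1 S0 y z
  rw [Mdist, parEven, parEven, hsum1, hsum0]
  by_cases h : S1 + y = 0 ∧ S0 + z = 0
  · rw [if_pos (hiff.mpr h), if_pos h.1, if_pos h.2]
    rw [Fintype.card_sum, Fintype.card_sum, hcard1, hcard0]
    simp only [Fintype.card_unit]
    rw [Nat.add_sub_cancel, Nat.add_sub_cancel, ← mul_inv, ← pow_add, Nat.add_sub_cancel' hk_le]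
  · rw [if_neg (fun hc => h (hiff.mp hc))]
    rcases not_and_or.mp h with h1 | h1
    · rw [if_neg h1, zero_mul]
    · rw [if_neg h1, mul_zero]
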